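/- Let C_A, C_B, T_A, T_B, Q be real numbers with C_A > 0, C_B > 0, 0 < T_A ≤ T_B, and 0 < Q < C_A·T_A. Then the finite-heat-capacity Clausius reservoir sum satisfies C_A·log((T_A − Q/C_A)/T_A) + C_B·log((T_B + Q/C_B)/T_B) < 0. -/

import Mathlib

/-!
A reservoir of heat capacity `C` at temperature `T` that absorbs heat `q` changes its Clausius
entropy by `C log ((T + q/C)/T)`, which `log x ≤ x - 1` bounds by `q / T`, strictly when `q ≠ 0`.
So the cold reservoir loses strictly more than `Q / T_A`, the hot one gains at most
`Q / T_B ≤ Q / T_A`.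
-/

open Real

theorem mul_log_add_div_div_le {C T q : ℝ} (hC : 0 < C) (hT : 0 < T) (hpos : 0 < T + q / C) :
    C * log ((T + q / C) / T) ≤ q / T :=
  calc C * log ((T + q / C) / T) ≤ C * ((T + q / C) / T - 1) :=
        mul_le_mul_of_nonneg_left (log_le_sub_one_of_pos (div_pos hpos hT)) hC.le
    _ = q / T := by field_simp; ring

theorem mul_log_add_div_div_lt {C T q : ℝ} (hC : 0 < C) (hT : 0 < T) (hpos : 0 < T + q / C)
    (hq : q ≠ 0) : C * log ((T + q / C) / T) < q / T := by
  have hne : (T + q / C) / T ≠ 1 := by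
    rw [Ne, div_eq_one_iff_eq hT.ne', add_eq_left]
    exact div_ne_zero hq hC.ne'
  calc C * log ((T + q / C) / T) < C * ((T + q / C) / T - 1) :=
        mul_lt_mul_of_pos_left (log_lt_sub_one_of_pos (div_pos hpos hT) hne) hC
    _ = q / T := by field_simp; ring

/-- Finite heat capacity version (Sec. 4.3): with heat capacities `C_A, C_B > 0`,
initial temperatures `0 < T_A ≤ T_B`, and transferred heat `0 < Q < C_A * T_A`,
the Clausius reservoir sum
`C_A * log((T_A - Q/C_A)/T_A) + C_B * log((T_B + Q/C_B)/T_B)` is negative. -/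
theorem clausius_finite_capacity_sum_neg
    (C_A C_B T_A T_B Q : ℝ)
    (hCA : 0 < C_A) (hCB : 0 < C_B)
    (hTA : 0 < T_A) (hTAB : T_A ≤ T_B)
    (hQ : 0 < Q) (hQlt : Q < C_A * T_A) :
    C_A * Real.log ((T_A - Q / C_A) / T_A)
      + C_B * Real.log ((T_B + Q / C_B) / T_B) < 0 := by
  have hTB : 0 < T_B := hTA.trans_le hTAB
  have hcold_pos : 0 < T_A + -Q / C_A := by
    rw [neg_div, ← sub_eq_add_neg, sub_pos, div_lt_iff₀ hCA]
    linarith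
  have hcold : C_A * log ((T_A - Q / C_A) / T_A) < -(Q / T_A) := by
    simpa only [neg_div, ← sub_eq_add_neg] using
      mul_log_add_div_div_lt hCA hTA hcold_pos (neg_ne_zero.mpr hQ.ne')
  have hhot : C_B * log ((T_B + Q / C_B) / T_B) ≤ Q / T_B :=
    mul_log_add_div_div_le hCB hTB (by positivity)
  have hcompare : Q / T_B ≤ Q / T_A := div_le_div_of_nonneg_left hQ.le hTA hTAB
  linarith
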